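/- Let A be a set of n agents, each with a nonnegative monotone submodular valuation v_a on a finite ground set G with v_a(∅) = 0, and let V_a be the multilinear extension of v_a. Let d ≥ 2. Let τ : A → G be an injection maximizing ∏_{a∈A} v_a({τ(a)}) over all injections from A to G, with v_a({τ(a)}) > 0 for every a, and set H = τ(A). Let y ∈ [0,1]^{A×G} with y_{aj} = 0 for all j ∈ H, and let π : A → H be an injection. Then there exists a partial matching ρ, assigning to each agent a either an item ρ(a) ∈ H or no item, with all assigned items distinct, such that: (∏_{a∈A} V_a(y_a + 1_{ρ(a)}))^{1/n} ≥ (1/(d+2)) · (∏_{a∈A} V_a(y_a + 1_{π(a)}))^{1/n}, where 1_{ρ(a)} = 0 if a is assigned no item; and for every agent a, either (i) a is assigned an item and v_a({ρ(a)}) ≥ V_a(y_a)/d, or (ii) v_a({j}) < V_a(y_a)/d for every item j ∈ G ∖ H. -/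

import Mathlib

set_option linter.unusedSectionVars false
set_option maxHeartbeats 1600000

open Finset

/-- A set function `v` on a finite ground set is submodular if
`v(S ∩ T) + v(S ∪ T) ≤ v(S) + v(T)` for all `S, T`. -/
def Submodular {G : Type*} [DecidableEq G] (v : Finset G → ℝ) : Prop :=
  ∀ S T : Finset G, v (S ∩ T) + v (S ∪ T) ≤ v S + v T

/-- The multilinear extension of a set function `v` on a finite ground set `G`. -/
noncomputable def multilinear {G : Type*} [Fintype G] [DecidableEq G]
    (v : Finset G → ℝ) (x : G → ℝ) : ℝ :=
  ∑ S : Finset G, v S * ((∏ j ∈ S, x j) * ∏ j ∈ Sᶜ, (1 - x j))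

/-- The indicator vector of a finite set `S`. -/
def indVec {G : Type*} [DecidableEq G] (S : Finset G) : G → ℝ :=
  fun j => if j ∈ S then 1 else 0

/-- The (at most singleton) finset associated to an optional item. -/
def optSet {G : Type*} : Option G → Finset G
  | none => ∅
  | some g => {g}

section ML
variable {G : Type*} [Fintype G] [DecidableEq G]

private lemma erase_compl_eq (g : G) (S : Finset G) (hgS : g ∉ S) :
    Sᶜ.erase g = (univ.erase g) \ S := by
  ext j
  simp only [mem_erase, mem_compl, mem_sdiff, mem_univ, true_and, and_true]

private lemma insert_compl_eq (g : G) (S : Finset G) :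
    (insert g S)ᶜ = (univ.erase g) \ S := by
  ext j
  simp only [mem_compl, mem_insert, mem_sdiff, mem_erase, mem_univ, and_true, true_and]
  tauto

lemma multilinear_split (v : Finset G → ℝ) (x : G → ℝ) (g : G) :
    multilinear v x = ∑ S ∈ (univ.erase g).powerset,
      ((1 - x g) * v S + x g * v (insert g S)) *
        ((∏ j ∈ S, x j) * ∏ j ∈ (univ.erase g) \ S, (1 - x j)) := by
  have hgu : g ∉ univ.erase g := notMem_erase g univ
  have h0 : (univ : Finset (Finset G)) = (insert g (univ.erase g)).powerset := by
    rw [Finset.insert_erase (mem_univ g), Finset.powerset_univ]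
  rw [multilinear, h0, Finset.sum_powerset_insert hgu, ← Finset.sum_add_distrib]
  refine Finset.sum_congr rfl (fun S hS => ?_)
  have hS' : S ⊆ univ.erase g := Finset.mem_powerset.mp hS
  have hgS : g ∉ S := fun h => hgu (hS' h)
  have hgSc : g ∈ Sᶜ := by simpa using hgS
  have h1 : ∏ j ∈ Sᶜ, (1 - x j) = (1 - x g) * ∏ j ∈ (univ.erase g) \ S, (1 - x j) := by
    rw [← Finset.mul_prod_erase Sᶜ _ hgSc, erase_compl_eq g S hgS]
  have h2 : ∏ j ∈ insert g S, x j = x g * ∏ j ∈ S, x j := Finset.prod_insert hgS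
  rw [h1, h2, insert_compl_eq g S]
  ring

lemma weightsum (x : G → ℝ) (g : G) :
    ∑ S ∈ (univ.erase g).powerset,
      (∏ j ∈ S, x j) * ∏ j ∈ (univ.erase g) \ S, (1 - x j) = 1 := by
  rw [← Finset.prod_add x (fun j => 1 - x j) (univ.erase g)]
  simp

lemma weight_nonneg (x : G → ℝ) (hx : ∀ j, 0 ≤ x j ∧ x j ≤ 1) (g : G) (S : Finset G) :
    0 ≤ (∏ j ∈ S, x j) * ∏ j ∈ (univ.erase g) \ S, (1 - x j) :=
  mul_nonneg (Finset.prod_nonneg fun j _ => (hx j).1)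
    (Finset.prod_nonneg fun j _ => by linarith [(hx j).2])

lemma multilinear_nonneg (v : Finset G → ℝ) (hv : ∀ S, 0 ≤ v S) (x : G → ℝ)
    (hx : ∀ j, 0 ≤ x j ∧ x j ≤ 1) : 0 ≤ multilinear v x := by
  apply Finset.sum_nonneg
  intro S _
  exact mul_nonneg (hv S) (mul_nonneg (Finset.prod_nonneg fun j _ => (hx j).1)
    (Finset.prod_nonneg fun j _ => by linarith [(hx j).2]))

lemma multilinear_rep_zero (v : Finset G → ℝ) (x : G → ℝ) (g : G) (hxg : x g = 0) :
    multilinear v x = ∑ S ∈ (univ.erase g).powerset,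
      v S * ((∏ j ∈ S, x j) * ∏ j ∈ (univ.erase g) \ S, (1 - x j)) := by
  rw [multilinear_split v x g]
  exact Finset.sum_congr rfl fun S _ => by rw [hxg]; ring

lemma multilinear_rep_one (v : Finset G → ℝ) (x : G → ℝ) (g : G) (hxg : x g = 1) :
    multilinear v x = ∑ S ∈ (univ.erase g).powerset,
      v (insert g S) * ((∏ j ∈ S, x j) * ∏ j ∈ (univ.erase g) \ S, (1 - x j)) := by
  rw [multilinear_split v x g]
  exact Finset.sum_congr rfl fun S _ => by rw [hxg]; ring

lemma add_ind_apply_ne (y : G → ℝ) (g j : G) (h : j ≠ g) : (y + indVec {g}) j = y j := by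
  simp [indVec, h]

lemma add_ind_apply_self (y : G → ℝ) (g : G) (hyg : y g = 0) : (y + indVec {g}) g = 1 := by
  simp [indVec, hyg]

lemma add_ind_mem01 (y : G → ℝ) (hy : ∀ j, 0 ≤ y j ∧ y j ≤ 1) (g : G) (hyg : y g = 0) :
    ∀ j, 0 ≤ (y + indVec {g}) j ∧ (y + indVec {g}) j ≤ 1 := by
  intro j
  by_cases h : j = g
  · subst h; rw [add_ind_apply_self y j hyg]; norm_num
  · rw [add_ind_apply_ne y g j h]; exact hy j

lemma multilinear_add_ind_rep (v : Finset G → ℝ) (y : G → ℝ) (g : G) (hyg : y g = 0) :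
    multilinear v (y + indVec {g}) = ∑ S ∈ (univ.erase g).powerset,
      v (insert g S) * ((∏ j ∈ S, y j) * ∏ j ∈ (univ.erase g) \ S, (1 - y j)) := by
  rw [multilinear_rep_one v _ g (add_ind_apply_self y g hyg)]
  refine Finset.sum_congr rfl fun S hS => ?_
  have hS' : S ⊆ univ.erase g := Finset.mem_powerset.mp hS
  congr 1
  congr 1
  · exact Finset.prod_congr rfl fun j hj => add_ind_apply_ne y g j (Finset.ne_of_mem_erase (hS' hj))
  · exact Finset.prod_congr rfl fun j hj => by
      have : j ∈ univ.erase g := (Finset.mem_sdiff.mp hj).1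
      rw [add_ind_apply_ne y g j (Finset.ne_of_mem_erase this)]

lemma multilinear_le_add_single (v : Finset G → ℝ) (hsub : Submodular v) (hemp : v ∅ = 0)
    (y : G → ℝ) (hy : ∀ j, 0 ≤ y j ∧ y j ≤ 1) (g : G) (hyg : y g = 0) :
    multilinear v (y + indVec {g}) ≤ multilinear v y + v {g} := by
  rw [multilinear_add_ind_rep v y g hyg, multilinear_rep_zero v y g hyg]
  have key : ∑ S ∈ (univ.erase g).powerset,
      v (insert g S) * ((∏ j ∈ S, y j) * ∏ j ∈ (univ.erase g) \ S, (1 - y j)) ≤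
      ∑ S ∈ (univ.erase g).powerset,
      (v S + v {g}) * ((∏ j ∈ S, y j) * ∏ j ∈ (univ.erase g) \ S, (1 - y j)) := by
    refine Finset.sum_le_sum fun S hS => ?_
    have hS' : S ⊆ univ.erase g := Finset.mem_powerset.mp hS
    have hgS : g ∉ S := fun h => notMem_erase g univ (hS' h)
    have hsm : v (insert g S) ≤ v S + v {g} := by
      have h2 := hsub S {g}
      have h3 : S ∩ {g} = ∅ := by
        ext j; simp only [mem_inter, mem_singleton, notMem_empty, iff_false, not_and]
        rintro hj rfl; exact hgS hj
      have h4 : S ∪ {g} = insert g S := by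
        ext j; simp [Finset.mem_union, Finset.mem_insert, or_comm]
      rw [h3, h4, hemp] at h2; linarith
    exact mul_le_mul_of_nonneg_right hsm (weight_nonneg y hy g S)
  refine key.trans (le_of_eq ?_)
  have : ∀ S ∈ (univ.erase g).powerset,
      (v S + v {g}) * ((∏ j ∈ S, y j) * ∏ j ∈ (univ.erase g) \ S, (1 - y j)) =
      v S * ((∏ j ∈ S, y j) * ∏ j ∈ (univ.erase g) \ S, (1 - y j)) +
      v {g} * ((∏ j ∈ S, y j) * ∏ j ∈ (univ.erase g) \ S, (1 - y j)) := fun S _ => by ring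
  rw [Finset.sum_congr rfl this, Finset.sum_add_distrib, ← Finset.mul_sum, weightsum, mul_one]

lemma multilinear_le_multilinear_add_single (v : Finset G → ℝ) (hmono : Monotone v)
    (y : G → ℝ) (hy : ∀ j, 0 ≤ y j ∧ y j ≤ 1) (g : G) (hyg : y g = 0) :
    multilinear v y ≤ multilinear v (y + indVec {g}) := by
  rw [multilinear_add_ind_rep v y g hyg, multilinear_rep_zero v y g hyg]
  exact Finset.sum_le_sum fun S _ =>
    mul_le_mul_of_nonneg_right (hmono (Finset.subset_insert g S)) (weight_nonneg y hy g S)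

lemma single_le_multilinear_add (v : Finset G → ℝ) (hmono : Monotone v)
    (y : G → ℝ) (hy : ∀ j, 0 ≤ y j ∧ y j ≤ 1) (g : G) (hyg : y g = 0) :
    v {g} ≤ multilinear v (y + indVec {g}) := by
  rw [multilinear_add_ind_rep v y g hyg]
  calc v {g} = ∑ S ∈ (univ.erase g).powerset,
      v {g} * ((∏ j ∈ S, y j) * ∏ j ∈ (univ.erase g) \ S, (1 - y j)) := by
        rw [← Finset.mul_sum, weightsum, mul_one]
    _ ≤ _ := Finset.sum_le_sum fun S _ =>
        mul_le_mul_of_nonneg_right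
          (hmono (Finset.singleton_subset_iff.mpr (mem_insert_self g S)))
          (weight_nonneg y hy g S)

lemma add_indVec_empty (y : G → ℝ) : y + indVec (∅ : Finset G) = y := by
  funext j; simp [indVec]

end ML


section Rot
variable {A G : Type*} [Fintype A] [Fintype G] [DecidableEq A] [DecidableEq G]

lemma rotate_bound (v : A → Finset G → ℝ)
    (τ : A → G) (hτinj : Function.Injective τ)
    (hτmax : ∀ τ' : A → G, Function.Injective τ' →
      ∏ a : A, v a {τ' a} ≤ ∏ a : A, v a {τ a})
    (hτpos : ∀ a, 0 < v a {τ a})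
    (σ : A → A) (hσinj : Function.Injective σ)
    (U : Finset A) (hcl : ∀ x ∈ U, σ x ∈ U) :
    ∏ x ∈ U, v x {τ (σ x)} ≤ ∏ x ∈ U, v x {τ x} := by
  classical
  set τ1 : A → G := fun x => if x ∈ U then τ (σ x) else τ x with hτ1
  have hinj : Function.Injective τ1 := by
    intro x x' h
    simp only [hτ1] at h
    by_cases h1 : x ∈ U <;> by_cases h2 : x' ∈ U <;> simp only [h1, h2, if_pos, if_neg,
      if_true, if_false] at h
    · exact hσinj (hτinj h)
    · exact absurd (hτinj h ▸ hcl x h1) h2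
    · exact absurd ((hτinj h).symm ▸ hcl x' h2) h1
    · exact hτinj h
  have hmax := hτmax τ1 hinj
  have hsplit : ∀ (f : A → ℝ), ∏ a : A, f a = (∏ a ∈ univ \ U, f a) * ∏ a ∈ U, f a :=
    fun f => (Finset.prod_sdiff (subset_univ U)).symm
  rw [hsplit (fun a => v a {τ1 a}), hsplit (fun a => v a {τ a})] at hmax
  have he1 : ∏ a ∈ univ \ U, v a {τ1 a} = ∏ a ∈ univ \ U, v a {τ a} :=
    Finset.prod_congr rfl fun a ha => by
      have : a ∉ U := (Finset.mem_sdiff.mp ha).2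
      simp [hτ1, this]
  have he2 : ∏ a ∈ U, v a {τ1 a} = ∏ a ∈ U, v a {τ (σ a)} :=
    Finset.prod_congr rfl fun a ha => by simp [hτ1, ha]
  rw [he1, he2] at hmax
  have hpos : 0 < ∏ a ∈ univ \ U, v a {τ a} := Finset.prod_pos fun a _ => hτpos a
  exact le_of_mul_le_mul_left hmax hpos

end Rot

section Rot2
variable {A G : Type*} [Fintype A] [Fintype G] [DecidableEq A] [DecidableEq G]

lemma rotate_bound' (v : A → Finset G → ℝ)
    (τ : A → G) (hτinj : Function.Injective τ)
    (hτmax : ∀ τ' : A → G, Function.Injective τ' →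
      ∏ a : A, v a {τ' a} ≤ ∏ a : A, v a {τ a})
    (hτpos : ∀ a, 0 < v a {τ a})
    (σ : A → A) (hσinj : Function.Injective σ)
    (B : Finset A) (z : A) (hz : z ∉ B)
    (hcl : ∀ x ∈ B, σ x ∈ B ∨ σ x = z) (j : G) (hj : ∀ b : A, τ b ≠ j) :
    (∏ x ∈ B, v x {τ (σ x)}) * v z {j} ≤ (∏ x ∈ B, v x {τ x}) * v z {τ z} := by
  classical
  set τ2 : A → G := fun x => if x ∈ B then τ (σ x) else if x = z then j else τ x with hτ2
  have hinj : Function.Injective τ2 := by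
    intro x x' h
    simp only [hτ2] at h
    by_cases h1 : x ∈ B <;> by_cases h2 : x' ∈ B
    · rw [if_pos h1, if_pos h2] at h; exact hσinj (hτinj h)
    · rw [if_pos h1, if_neg h2] at h
      by_cases h3 : x' = z
      · rw [if_pos h3] at h; exact absurd h (hj (σ x))
      · rw [if_neg h3] at h
        rcases hcl x h1 with h4 | h4
        · exact absurd (hτinj h ▸ h4) h2
        · exact absurd (hτinj h ▸ h4) h3
    · rw [if_neg h1, if_pos h2] at h
      by_cases h3 : x = z
      · rw [if_pos h3] at h; exact absurd h.symm (hj (σ x'))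
      · rw [if_neg h3] at h
        rcases hcl x' h2 with h4 | h4
        · exact absurd ((hτinj h).symm ▸ h4) h1
        · exact absurd ((hτinj h).symm ▸ h4) h3
    · rw [if_neg h1, if_neg h2] at h
      by_cases h3 : x = z <;> by_cases h4 : x' = z
      · rw [h3, h4]
      · rw [if_pos h3, if_neg h4] at h; exact absurd h.symm (hj x')
      · rw [if_neg h3, if_pos h4] at h; exact absurd h (hj x)
      · rw [if_neg h3, if_neg h4] at h; exact hτinj h
  have hmax := hτmax τ2 hinj
  have hzB : z ∈ univ \ B := Finset.mem_sdiff.mpr ⟨mem_univ z, hz⟩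
  have hsplit : ∀ (f : A → ℝ), ∏ a : A, f a =
      (f z * ∏ a ∈ (univ \ B).erase z, f a) * ∏ a ∈ B, f a := fun f => by
    rw [Finset.mul_prod_erase (univ \ B) f hzB, Finset.prod_sdiff (subset_univ B)]
  rw [hsplit (fun a => v a {τ2 a}), hsplit (fun a => v a {τ a})] at hmax
  have he0 : v z {τ2 z} = v z {j} := by simp [hτ2, hz]
  have he1 : ∏ a ∈ (univ \ B).erase z, v a {τ2 a} = ∏ a ∈ (univ \ B).erase z, v a {τ a} :=
    Finset.prod_congr rfl fun a ha => by
      have h1 : a ≠ z := (Finset.mem_erase.mp ha).1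
      have h2 : a ∉ B := (Finset.mem_sdiff.mp (Finset.mem_erase.mp ha).2).2
      simp [hτ2, h1, h2]
  have he2 : ∏ a ∈ B, v a {τ2 a} = ∏ a ∈ B, v a {τ (σ a)} :=
    Finset.prod_congr rfl fun a ha => by simp [hτ2, ha]
  rw [he0, he1, he2] at hmax
  have hpos : 0 < ∏ a ∈ (univ \ B).erase z, v a {τ a} :=
    Finset.prod_pos fun a _ => hτpos a
  have hmax' : ((∏ x ∈ B, v x {τ (σ x)}) * v z {j}) * ∏ a ∈ (univ \ B).erase z, v a {τ a} ≤
      ((∏ x ∈ B, v x {τ x}) * v z {τ z}) * ∏ a ∈ (univ \ B).erase z, v a {τ a} := by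
    ring_nf
    ring_nf at hmax
    linarith [hmax]
  exact le_of_mul_le_mul_right hmax' hpos
end Rot2

lemma rpow_helper (d : ℝ) (hd : 2 ≤ d) (n : ℕ) (Pρ Pπ : ℝ) (hρ : 0 ≤ Pρ) (hπ : 0 ≤ Pπ)
    (h : Pπ ≤ (d + 2) ^ n * Pρ) :
    Pρ ^ ((1 : ℝ) / n) ≥ (1 / (d + 2)) * Pπ ^ ((1 : ℝ) / n) := by
  have hd2 : (0 : ℝ) < d + 2 := by linarith
  rcases Nat.eq_zero_or_pos n with hn | hn
  · subst hn
    simp only [Nat.cast_zero, div_zero, Real.rpow_zero, mul_one, ge_iff_le]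
    rw [div_le_one hd2]; linarith
  · have hne : ((n : ℝ)) ≠ 0 := Nat.cast_ne_zero.mpr hn.ne'
    have h2 : Pπ ^ ((1 : ℝ) / n) ≤ ((d + 2) ^ n * Pρ) ^ ((1 : ℝ) / n) :=
      Real.rpow_le_rpow hπ h (by positivity)
    have h3 : ((d + 2) ^ n * Pρ) ^ ((1 : ℝ) / n) =
        ((d + 2) ^ n) ^ ((1 : ℝ) / n) * Pρ ^ ((1 : ℝ) / n) :=
      Real.mul_rpow (by positivity) hρ
    have h4 : ((d + 2) ^ n : ℝ) ^ ((1 : ℝ) / n) = d + 2 := by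
      rw [← Real.rpow_natCast (d + 2) n, ← Real.rpow_mul hd2.le]
      rw [mul_one_div, div_self hne, Real.rpow_one]
    rw [h3, h4] at h2
    rw [ge_iff_le, one_div, inv_mul_le_iff₀ hd2]  -- check name
    exact h2

/-- matching recombination: given the optimal initial matching `τ` and any
matching `π : A → H`, there is a partial matching `ρ` into `H` losing at most a factor
`d+2` in NSW value, such that each agent either gets a `ρ`-item worth at least
`V_a(y_a)/d`, or has no item outside `H` worth `V_a(y_a)/d`. -/
theorem matching_recombination {A G : Type*} [Fintype A] [Fintype G] [DecidableEq A]
    [DecidableEq G] (v : A → Finset G → ℝ)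
    (hnn : ∀ a S, 0 ≤ v a S) (hmono : ∀ a, Monotone (v a)) (hsub : ∀ a, Submodular (v a))
    (hempty : ∀ a, v a ∅ = 0)
    (d : ℝ) (hd : 2 ≤ d)
    (τ : A → G) (hτinj : Function.Injective τ)
    (hτmax : ∀ τ' : A → G, Function.Injective τ' →
      ∏ a : A, v a {τ' a} ≤ ∏ a : A, v a {τ a})
    (hτpos : ∀ a, 0 < v a {τ a})
    (y : A → G → ℝ) (hy01 : ∀ a j, 0 ≤ y a j ∧ y a j ≤ 1)
    (hyH : ∀ a a' : A, y a (τ a') = 0)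
    (π : A → G) (hπinj : Function.Injective π)
    (hπH : ∀ a, π a ∈ Finset.univ.image τ) :
    ∃ ρ : A → Option G,
      (∀ a a' : A, ∀ g : G, ρ a = some g → ρ a' = some g → a = a') ∧
      (∀ a : A, ∀ g : G, ρ a = some g → g ∈ Finset.univ.image τ) ∧
      (∏ a : A, multilinear (v a) (y a + indVec (optSet (ρ a)))) ^ ((1 : ℝ) / Fintype.card A)
        ≥ (1 / (d + 2)) *
          (∏ a : A, multilinear (v a) (y a + indVec {π a})) ^ ((1 : ℝ) / Fintype.card A) ∧
      (∀ a : A,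
        (∃ g : G, ρ a = some g ∧ multilinear (v a) (y a) / d ≤ v a {g}) ∨
        (∀ j : G, j ∉ Finset.univ.image τ → v a {j} < multilinear (v a) (y a) / d)) := by
  classical
  have hd0 : (0 : ℝ) < d := by linarith
  have hd2 : (0 : ℝ) < d + 2 := by linarith
  -- abbreviations
  set Vv : A → ℝ := fun a => multilinear (v a) (y a) with hVv
  set pp : A → ℝ := fun a => v a {π a} with hpp
  set ss : A → ℝ := fun a => v a {τ a} with hss
  set Qτ : A → ℝ := fun a => multilinear (v a) (y a + indVec {τ a}) with hQτ
  set Qπ : A → ℝ := fun a => multilinear (v a) (y a + indVec {π a}) with hQπ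
  have hyπ : ∀ a b : A, y a (π b) = 0 := by
    intro a b
    obtain ⟨c, _, hc⟩ := Finset.mem_image.mp (hπH b)
    rw [← hc]; exact hyH a c
  have hV0 : ∀ a, 0 ≤ Vv a := fun a => multilinear_nonneg (v a) (hnn a) (y a) (hy01 a)
  have hp0 : ∀ a, 0 ≤ pp a := fun a => hnn a _
  have hs0 : ∀ a, 0 < ss a := fun a => hτpos a
  have hQπ0 : ∀ a, 0 ≤ Qπ a := fun a =>
    multilinear_nonneg (v a) (hnn a) _ (add_ind_mem01 (y a) (hy01 a) (π a) (hyπ a a))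
  have hQτ0 : ∀ a, 0 ≤ Qτ a := fun a =>
    multilinear_nonneg (v a) (hnn a) _ (add_ind_mem01 (y a) (hy01 a) (τ a) (hyH a a))
  have hQπle : ∀ a, Qπ a ≤ Vv a + pp a := fun a =>
    multilinear_le_add_single (v a) (hsub a) (hempty a) (y a) (hy01 a) (π a) (hyπ a a)
  have hQπgeV : ∀ a, Vv a ≤ Qπ a := fun a =>
    multilinear_le_multilinear_add_single (v a) (hmono a) (y a) (hy01 a) (π a) (hyπ a a)
  have hQπgep : ∀ a, pp a ≤ Qπ a := fun a =>
    single_le_multilinear_add (v a) (hmono a) (y a) (hy01 a) (π a) (hyπ a a)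
  have hQτgeV : ∀ a, Vv a ≤ Qτ a := fun a =>
    multilinear_le_multilinear_add_single (v a) (hmono a) (y a) (hy01 a) (τ a) (hyH a a)
  have hQτges : ∀ a, ss a ≤ Qτ a := fun a =>
    single_le_multilinear_add (v a) (hmono a) (y a) (hy01 a) (τ a) (hyH a a)
  -- the swap bound: any item outside H is worth at most the τ-item
  have hsw : ∀ (a : A) (j : G), j ∉ Finset.univ.image τ → v a {j} ≤ ss a := by
    intro a j hj
    have hτ'inj : Function.Injective (Function.update τ a j) := by
      intro x x' h
      by_cases hx : x = a <;> by_cases hx' : x' = a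
      · rw [hx, hx']
      · rw [hx, Function.update_self, Function.update_of_ne hx'] at h
        exact absurd (Finset.mem_image.mpr ⟨x', mem_univ x', h.symm⟩) hj
      · rw [hx', Function.update_self, Function.update_of_ne hx] at h
        exact absurd (Finset.mem_image.mpr ⟨x, mem_univ x, h⟩) hj
      · rw [Function.update_of_ne hx, Function.update_of_ne hx'] at h
        exact hτinj h
    have hmax := hτmax _ hτ'inj
    have hsplit : ∀ f : A → ℝ, ∏ b : A, f b = f a * ∏ b ∈ univ.erase a, f b :=
      fun f => (Finset.mul_prod_erase univ f (mem_univ a)).symm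
    rw [hsplit (fun b => v b {Function.update τ a j b}), hsplit (fun b => v b {τ b})] at hmax
    have he : ∏ b ∈ univ.erase a, v b {Function.update τ a j b} =
        ∏ b ∈ univ.erase a, v b {τ b} :=
      Finset.prod_congr rfl fun b hb => by
        rw [Function.update_of_ne (Finset.mem_erase.mp hb).1]
    rw [he, Function.update_self] at hmax
    have hpos : 0 < ∏ b ∈ univ.erase a, v b {τ b} := Finset.prod_pos fun b _ => hτpos b
    exact le_of_mul_le_mul_right hmax hpos
  have hAcase : ∀ a : A, (Vv a / d ≤ ss a) ∨
      (∀ j, j ∉ Finset.univ.image τ → v a {j} < Vv a / d) := by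
    intro a
    by_cases hA : ∃ j, j ∉ Finset.univ.image τ ∧ Vv a / d ≤ v a {j}
    · obtain ⟨j, hj1, hj2⟩ := hA
      exact Or.inl (hj2.trans (hsw a j hj1))
    · push_neg at hA
      exact Or.inr hA
  by_cases hzero : ∃ a, Vv a + pp a ≤ 0
  · -- degenerate case: the π-side product is zero; use ρ = τ
    obtain ⟨a₀, ha₀⟩ := hzero
    refine ⟨fun a => some (τ a), ?_, ?_, ?_, ?_⟩
    · intro a a' g h h'
      exact hτinj ((Option.some.inj h).trans (Option.some.inj h').symm)
    · intro a g h
      rw [← Option.some.inj h]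
      exact Finset.mem_image.mpr ⟨a, mem_univ a, rfl⟩
    · have hπ0 : Qπ a₀ = 0 := le_antisymm (by linarith [hQπle a₀]) (hQπ0 a₀)
      have hPπ : ∏ a : A, multilinear (v a) (y a + indVec {π a}) = 0 :=
        Finset.prod_eq_zero (mem_univ a₀) (by simpa [hQπ] using hπ0)
      rw [hPπ]
      have hρ0 : 0 ≤ ∏ a : A, multilinear (v a) (y a + indVec (optSet (some (τ a)))) :=
        Finset.prod_nonneg fun a _ =>
          multilinear_nonneg (v a) (hnn a) _ (add_ind_mem01 (y a) (hy01 a) (τ a) (hyH a a))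
      exact rpow_helper d hd (Fintype.card A) _ 0 hρ0 le_rfl
        (mul_nonneg (pow_nonneg hd2.le _) hρ0)
    · intro a
      rcases hAcase a with h | h
      · exact Or.inl ⟨τ a, rfl, h⟩
      · exact Or.inr h
  push_neg at hzero
  -- main case
  have hσex : ∀ a : A, ∃ b : A, τ b = π a := by
    intro a
    obtain ⟨c, _, hc⟩ := Finset.mem_image.mp (hπH a)
    exact ⟨c, hc⟩
  choose σ hσ using hσex
  have hσinj : Function.Injective σ := fun a b h => hπinj (by rw [← hσ a, ← hσ b, h])
  set A' : A → Prop := fun a => ∃ j, j ∉ Finset.univ.image τ ∧ Vv a / d ≤ v a {j} with hA'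
  set Cc : A → Prop := fun a => A' a ∨ (d + 1) * Vv a < pp a with hCc
  set NN : A → Prop := fun a => A' a ∧ pp a < Vv a / d with hNNd
  set T : A → Prop :=
    fun a => ∃ k : ℕ, (∀ i, i < k → Cc (σ^[i] a)) ∧ NN (σ^[k] a) with hT
  have hTN : ∀ a, NN a → T a := by
    intro a h
    exact ⟨0, fun i hi => absurd hi (Nat.not_lt_zero i), by simpa using h⟩
  have hTstep : ∀ a, Cc a → T (σ a) → T a := by
    rintro a hc ⟨k, hk1, hk2⟩
    refine ⟨k + 1, ?_, ?_⟩
    · intro i hi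
      cases i with
      | zero => simpa using hc
      | succ m => rw [Function.iterate_succ_apply]; exact hk1 m (by omega)
    · rw [Function.iterate_succ_apply]; exact hk2
  have hTdest : ∀ a, T a → NN a ∨ (Cc a ∧ T (σ a)) := by
    rintro a ⟨k, hk1, hk2⟩
    cases k with
    | zero => exact Or.inl (by simpa using hk2)
    | succ m =>
      refine Or.inr ⟨by simpa using hk1 0 (Nat.succ_pos m), ⟨m, ?_, ?_⟩⟩
      · intro i hi
        rw [← Function.iterate_succ_apply]
        exact hk1 (i + 1) (by omega)
      · rw [← Function.iterate_succ_apply]; exact hk2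
  -- the partial matching
  refine ⟨fun a => if T a then some (τ a) else if T (σ a) then none else some (π a),
    ?_, ?_, ?_, ?_⟩
  · -- injectivity of assigned items
    intro a a' g h h'
    dsimp only at h h'
    by_cases h1 : T a <;> by_cases h2 : T a'
    · rw [if_pos h1] at h; rw [if_pos h2] at h'
      exact hτinj ((Option.some.inj h).trans (Option.some.inj h').symm)
    · rw [if_pos h1] at h; rw [if_neg h2] at h'
      by_cases h3 : T (σ a')
      · rw [if_pos h3] at h'; exact absurd h' (by simp)
      · rw [if_neg h3] at h'
        have he : τ a = τ (σ a') := by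
          rw [hσ a']
          exact (Option.some.inj h).trans (Option.some.inj h').symm
        exact absurd (hτinj he ▸ h1) h3
    · rw [if_neg h1] at h; rw [if_pos h2] at h'
      by_cases h3 : T (σ a)
      · rw [if_pos h3] at h; exact absurd h (by simp)
      · rw [if_neg h3] at h
        have he : τ a' = τ (σ a) := by
          rw [hσ a]
          exact (Option.some.inj h').trans (Option.some.inj h).symm
        exact absurd (hτinj he ▸ h2) h3
    · rw [if_neg h1] at h; rw [if_neg h2] at h'
      by_cases h3 : T (σ a)
      · rw [if_pos h3] at h; exact absurd h (by simp)
      · by_cases h4 : T (σ a')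
        · rw [if_pos h4] at h'; exact absurd h' (by simp)
        · rw [if_neg h3] at h; rw [if_neg h4] at h'
          exact hπinj ((Option.some.inj h).trans (Option.some.inj h').symm)
  · -- assigned items lie in H
    intro a g h
    dsimp only at h
    by_cases h1 : T a
    · rw [if_pos h1] at h
      rw [← Option.some.inj h]
      exact Finset.mem_image.mpr ⟨a, mem_univ a, rfl⟩
    · rw [if_neg h1] at h
      by_cases h2 : T (σ a)
      · rw [if_pos h2] at h; exact absurd h (by simp)
      · rw [if_neg h2] at h
        rw [← Option.some.inj h]
        exact hπH a
  · -- the NSW bound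
    set Tf : Finset A := univ.filter T with hTf
    set Sf : Finset A := Tf.filter (fun a => Vv a < pp a) with hSf
    set Rf : Finset A := Tf.filter (fun a => ¬ Vv a < pp a) with hRf
    set Uf : Finset A := Sf.filter (fun a => ∀ k : ℕ, σ^[k] a ∈ Sf) with hUf
    set Ef : Finset A := Sf.filter (fun a => ¬ ∀ k : ℕ, σ^[k] a ∈ Sf) with hEf
    set exf : A → A :=
      fun a => if h : ∃ k : ℕ, σ^[k] a ∉ Sf then σ^[Nat.find h] a else a with hexf
    set Wf : Finset A := Ef.image exf with hWf
    set Bf : A → Finset A := fun z => Ef.filter (fun a => exf a = z) with hBfd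
    set Df : Finset A := (univ.filter fun a => ¬ T a).filter (fun a => T (σ a)) with hDf
    set Pf : Finset A := (univ.filter fun a => ¬ T a).filter (fun a => ¬ T (σ a)) with hPf
    -- basic nonnegativity of products
    have hssP : ∀ X : Finset A, 0 ≤ ∏ a ∈ X, ss a :=
      fun X => Finset.prod_nonneg fun a _ => (hs0 a).le
    have hppP : ∀ X : Finset A, 0 ≤ ∏ a ∈ X, pp a :=
      fun X => Finset.prod_nonneg fun a _ => hp0 a
    have hVvP : ∀ X : Finset A, 0 ≤ ∏ a ∈ X, Vv a :=
      fun X => Finset.prod_nonneg fun a _ => hV0 a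
    have hQτP : ∀ X : Finset A, 0 ≤ ∏ a ∈ X, Qτ a :=
      fun X => Finset.prod_nonneg fun a _ => hQτ0 a
    have hQπP : ∀ X : Finset A, 0 ≤ ∏ a ∈ X, Qπ a :=
      fun X => Finset.prod_nonneg fun a _ => hQπ0 a
    -- no N-agent is in Sf
    have hNS : ∀ x ∈ Sf, ¬ NN x := by
      intro x hx hN
      have h1 : Vv x < pp x := (Finset.mem_filter.mp hx).2
      have h2 : pp x < Vv x / d := hN.2
      have h3 : Vv x / d ≤ Vv x := div_le_self (hV0 x) (by linarith)
      linarith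
    have hEfm : ∀ {x : A}, x ∈ Ef → x ∈ Sf ∧ ∃ k : ℕ, σ^[k] x ∉ Sf := by
      intro x hx
      have h := Finset.mem_filter.mp hx
      exact ⟨h.1, not_forall.mp h.2⟩
    have huniq : ∀ (w : A) (k1 k2 : ℕ), (∀ i, i < k1 → σ^[i] w ∈ Sf) → σ^[k1] w ∉ Sf →
        (∀ i, i < k2 → σ^[i] w ∈ Sf) → σ^[k2] w ∉ Sf → k1 = k2 := by
      intro w k1 k2 h1 h2 h3 h4
      by_contra hne
      rcases Nat.lt_or_ge k1 k2 with h | h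
      · exact h2 (h3 k1 h)
      · exact h4 (h1 k2 (by omega))
    have hkey : ∀ x ∈ Ef, ∃ k : ℕ, 0 < k ∧ (∀ i, i < k → σ^[i] x ∈ Sf) ∧
        σ^[k] x ∉ Sf ∧ exf x = σ^[k] x := by
      intro x hx
      obtain ⟨hxS, h⟩ := hEfm hx
      refine ⟨Nat.find h, ?_, ?_, Nat.find_spec h, ?_⟩
      · rcases Nat.eq_zero_or_pos (Nat.find h) with h0 | h0
        · exfalso
          have hsp := Nat.find_spec h
          rw [h0] at hsp
          exact hsp (by simpa using hxS)
        · exact h0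
      · intro i hi
        exact not_not.mp (Nat.find_min h hi)
      · simp only [hexf]
        rw [dif_pos h]
    -- the exit of a block lies in Rf and satisfies A'
    have hexit : ∀ x ∈ Ef, exf x ∈ Rf ∧ A' (exf x) := by
      intro x hx
      obtain ⟨k, hk0, hkmem, hkspec, hexeq⟩ := hkey x hx
      obtain ⟨m, hm⟩ : ∃ m, k = m + 1 := ⟨k - 1, by omega⟩
      have hb : σ^[m] x ∈ Sf := hkmem m (by omega)
      have hz1 : σ (σ^[m] x) = σ^[k] x := by
        rw [hm, Function.iterate_succ_apply' σ m x]
      have hTb : T (σ^[m] x) := (Finset.mem_filter.mp (Finset.mem_filter.mp hb).1).2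
      have hTz : T (σ^[k] x) := by
        rcases hTdest _ hTb with hN | hC
        · exact absurd hN (hNS _ hb)
        · rw [← hz1]; exact hC.2
      have hzRf : exf x ∈ Rf := by
        rw [hexeq]
        refine Finset.mem_filter.mpr ⟨Finset.mem_filter.mpr ⟨mem_univ _, hTz⟩, ?_⟩
        intro hlt
        exact hkspec (Finset.mem_filter.mpr ⟨Finset.mem_filter.mpr ⟨mem_univ _, hTz⟩, hlt⟩)
      refine ⟨hzRf, ?_⟩
      have hple : pp (exf x) ≤ Vv (exf x) := not_lt.mp (Finset.mem_filter.mp hzRf).2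
      have hTex : T (exf x) := by rw [hexeq]; exact hTz
      rcases hTdest _ hTex with hN | hC
      · exact hN.1
      · rcases hC.1 with hA | hgt
        · exact hA
        · exfalso; nlinarith [hV0 (exf x)]
    -- block closure
    have hBcl : ∀ z : A, ∀ x ∈ Bf z, σ x ∈ Bf z ∨ σ x = z := by
      intro z x hx
      have hxE : x ∈ Ef := (Finset.mem_filter.mp hx).1
      have hxz : exf x = z := (Finset.mem_filter.mp hx).2
      obtain ⟨k, hk0, hkmem, hkspec, hexeq⟩ := hkey x hxE
      obtain ⟨m, hm⟩ : ∃ m, k = m + 1 := ⟨k - 1, by omega⟩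
      by_cases hm0 : m = 0
      · right
        have : σ x = σ^[k] x := by
          rw [hm, hm0, Function.iterate_one]
        rw [this, ← hexeq, hxz]
      · left
        have hσxS : σ x ∈ Sf := by
          have := hkmem 1 (by omega)
          rwa [Function.iterate_one] at this
        have hmem' : ∀ i, i < m → σ^[i] (σ x) ∈ Sf := by
          intro i hi
          rw [← Function.iterate_succ_apply σ i x]
          exact hkmem (i + 1) (by omega)
        have hspec' : σ^[m] (σ x) ∉ Sf := by
          rw [← Function.iterate_succ_apply σ m x, Nat.succ_eq_add_one, ← hm]
          exact hkspec
        have hσxE : σ x ∈ Ef := by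
          refine Finset.mem_filter.mpr ⟨hσxS, ?_⟩
          push_neg
          exact ⟨m, hspec'⟩
        obtain ⟨k', hk'0, hk'mem, hk'spec, hexeq'⟩ := hkey (σ x) hσxE
        have hk'm : k' = m := huniq (σ x) k' m hk'mem hk'spec hmem' hspec'
        refine Finset.mem_filter.mpr ⟨hσxE, ?_⟩
        rw [hexeq', hk'm, ← Function.iterate_succ_apply σ m x, Nat.succ_eq_add_one, ← hm,
          ← hexeq, hxz]
    -- U is forward closed
    have hUcl : ∀ x ∈ Uf, σ x ∈ Uf := by
      intro x hx
      obtain ⟨hxS, hall⟩ := Finset.mem_filter.mp hx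
      refine Finset.mem_filter.mpr ⟨by simpa using hall 1, fun k => ?_⟩
      rw [← Function.iterate_succ_apply]
      exact hall (k + 1)
    have hUrot : ∏ x ∈ Uf, pp x ≤ ∏ x ∈ Uf, ss x := by
      have hr := rotate_bound v τ hτinj hτmax hτpos σ hσinj Uf hUcl
      calc ∏ x ∈ Uf, pp x = ∏ x ∈ Uf, v x {τ (σ x)} :=
            Finset.prod_congr rfl fun x _ => by rw [hσ x]
        _ ≤ _ := hr
    -- block rotations
    have hBrot : ∀ z ∈ Wf, (∏ x ∈ Bf z, pp x) * Vv z ≤ d * ((∏ x ∈ Bf z, ss x) * ss z) := by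
      intro z hz
      obtain ⟨x₀, hx₀E, hx₀z⟩ := Finset.mem_image.mp hz
      have hzRf : z ∈ Rf := hx₀z ▸ (hexit x₀ hx₀E).1
      have hzA' : A' z := hx₀z ▸ (hexit x₀ hx₀E).2
      obtain ⟨jz, hjz1, hjz2⟩ := hzA'
      have hjz' : ∀ b : A, τ b ≠ jz :=
        fun b hb => hjz1 (Finset.mem_image.mpr ⟨b, mem_univ b, hb⟩)
      have hzB : z ∉ Bf z := by
        intro hc
        have h5 : z ∈ Sf := (Finset.mem_filter.mp ((Finset.mem_filter.mp hc).1)).1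
        have h6 : ¬ Vv z < pp z := (Finset.mem_filter.mp hzRf).2
        exact h6 (Finset.mem_filter.mp h5).2
      have hrot := rotate_bound' v τ hτinj hτmax hτpos σ hσinj (Bf z) z hzB (hBcl z) jz hjz'
      have he1 : ∏ x ∈ Bf z, v x {τ (σ x)} = ∏ x ∈ Bf z, pp x :=
        Finset.prod_congr rfl fun x _ => by rw [hσ x]
      rw [he1] at hrot
      have hVle : Vv z ≤ d * v z {jz} := by
        rw [div_le_iff₀ hd0] at hjz2
        linarith
      calc (∏ x ∈ Bf z, pp x) * Vv z ≤ (∏ x ∈ Bf z, pp x) * (d * v z {jz}) :=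
            mul_le_mul_of_nonneg_left hVle (hppP (Bf z))
        _ = d * ((∏ x ∈ Bf z, pp x) * v z {jz}) := by ring
        _ ≤ d * ((∏ x ∈ Bf z, ss x) * ss z) := mul_le_mul_of_nonneg_left hrot hd0.le
    -- fiberwise decomposition of Ef
    have hfib : ∀ f : A → ℝ, ∏ z ∈ Wf, ∏ x ∈ Bf z, f x = ∏ x ∈ Ef, f x := by
      intro f
      simp only [hBfd, hWf]
      exact Finset.prod_fiberwise_of_maps_to (fun x hx => Finset.mem_image_of_mem exf hx) f
    have hWsub : Wf ⊆ Rf := by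
      intro z hz
      obtain ⟨x₀, hx₀E, hx₀z⟩ := Finset.mem_image.mp hz
      exact hx₀z ▸ (hexit x₀ hx₀E).1
    -- cardinality bound
    have hcard : 2 * Wf.card ≤ Tf.card := by
      have h1 : Wf.card ≤ Ef.card := Finset.card_image_le
      have h2 : Wf.card ≤ Rf.card := Finset.card_le_card hWsub
      have h3 : Sf.card + Rf.card = Tf.card := by
        rw [hSf, hRf]
        exact Finset.card_filter_add_card_filter_not _
      have h4 : Ef.card ≤ Sf.card := by
        rw [hEf]
        exact Finset.card_le_card (Finset.filter_subset _ _)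
      omega
    -- product splittings
    have hsplitSR : ∀ f : A → ℝ, ∏ a ∈ Tf, f a = (∏ a ∈ Sf, f a) * ∏ a ∈ Rf, f a := by
      intro f
      rw [hSf, hRf, Finset.prod_filter_mul_prod_filter_not]
    have hsplitUE : ∀ f : A → ℝ, ∏ a ∈ Sf, f a = (∏ a ∈ Uf, f a) * ∏ a ∈ Ef, f a := by
      intro f
      rw [hUf, hEf, Finset.prod_filter_mul_prod_filter_not]
    have hsplitRW : ∀ f : A → ℝ, ∏ a ∈ Rf, f a = (∏ a ∈ Rf \ Wf, f a) * ∏ a ∈ Wf, f a :=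
      fun f => (Finset.prod_sdiff hWsub).symm
    have hsplit3 : ∀ f : A → ℝ,
        ∏ a : A, f a = (∏ a ∈ Tf, f a) * ((∏ a ∈ Df, f a) * ∏ a ∈ Pf, f a) := by
      intro f
      rw [hTf, hDf, hPf,
        Finset.prod_filter_mul_prod_filter_not (univ.filter fun a => ¬ T a) (fun a => T (σ a)) f,
        Finset.prod_filter_mul_prod_filter_not univ T f]
    have hcard3 : Tf.card + (Df.card + Pf.card) = Fintype.card A := by
      have c1 : Tf.card + (univ.filter fun a => ¬ T a).card = Fintype.card A := by
        rw [hTf, ← Finset.card_univ]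
        exact Finset.card_filter_add_card_filter_not _
      have c2 : Df.card + Pf.card = (univ.filter fun a => ¬ T a).card := by
        rw [hDf, hPf]
        exact Finset.card_filter_add_card_filter_not _
      omega
    -- scalar bound
    have hscalar : (2 : ℝ) ^ Tf.card * d ^ Wf.card ≤ (d + 2) ^ Tf.card := by
      have h0 : (0 : ℝ) ≤ 2 ^ Tf.card * d ^ Wf.card := by positivity
      have h1 : (0 : ℝ) ≤ (d + 2) ^ Tf.card := by positivity
      apply (pow_le_pow_iff_left₀ h0 h1 two_ne_zero).mp
      have e1 : ((2 : ℝ) ^ Tf.card * d ^ Wf.card) ^ 2 = 4 ^ Tf.card * d ^ (Wf.card * 2) := by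
        rw [mul_pow, ← pow_mul, ← pow_mul, mul_comm Tf.card 2, pow_mul]
        norm_num
      have e2 : ((d + 2) ^ Tf.card) ^ 2 = ((d + 2) ^ 2) ^ Tf.card := by
        rw [← pow_mul, mul_comm, pow_mul]
      rw [e1, e2]
      calc (4 : ℝ) ^ Tf.card * d ^ (Wf.card * 2) ≤ 4 ^ Tf.card * d ^ Tf.card := by
            apply mul_le_mul_of_nonneg_left ?_ (by positivity)
            exact pow_le_pow_right₀ (by linarith) (by omega)
        _ = (4 * d) ^ Tf.card := (mul_pow 4 d Tf.card).symm
        _ ≤ ((d + 2) ^ 2) ^ Tf.card := by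
            apply pow_le_pow_left₀ (by linarith) (by nlinarith) Tf.card
    -- piece T
    have hC1 : ∏ a ∈ Tf, (Vv a + pp a) ≤ (d + 2) ^ Tf.card * ∏ a ∈ Tf, Qτ a := by
      have s1 : ∏ a ∈ Tf, (Vv a + pp a) ≤ ∏ a ∈ Tf, (2 * max (Vv a) (pp a)) := by
        refine Finset.prod_le_prod (fun a _ => add_nonneg (hV0 a) (hp0 a)) (fun a _ => ?_)
        rcases le_total (Vv a) (pp a) with h | h
        · rw [max_eq_right h]; linarith
        · rw [max_eq_left h]; linarith
      have s2 : ∏ a ∈ Tf, (2 * max (Vv a) (pp a)) =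
          2 ^ Tf.card * ∏ a ∈ Tf, max (Vv a) (pp a) := by
        rw [Finset.prod_mul_distrib, Finset.prod_const]
      have s3 : ∏ a ∈ Tf, max (Vv a) (pp a) = (∏ a ∈ Sf, pp a) * ∏ a ∈ Rf, Vv a := by
        rw [hsplitSR (fun a => max (Vv a) (pp a))]
        congr 1
        · exact Finset.prod_congr rfl fun a ha =>
            max_eq_right (le_of_lt (Finset.mem_filter.mp ha).2)
        · exact Finset.prod_congr rfl fun a ha =>
            max_eq_left (not_lt.mp (Finset.mem_filter.mp ha).2)
      have s4 : (∏ a ∈ Sf, pp a) * ∏ a ∈ Rf, Vv a ≤ d ^ Wf.card * ∏ a ∈ Tf, Qτ a := by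
        have e3 : (∏ a ∈ Sf, pp a) * ∏ a ∈ Rf, Vv a =
            (∏ a ∈ Uf, pp a) * (∏ z ∈ Wf, ((∏ x ∈ Bf z, pp x) * Vv z)) *
              ∏ a ∈ Rf \ Wf, Vv a := by
          rw [hsplitUE pp, ← hfib pp, hsplitRW Vv, Finset.prod_mul_distrib]
          ring
        rw [e3]
        have hb2 : ∏ z ∈ Wf, ((∏ x ∈ Bf z, pp x) * Vv z) ≤
            ∏ z ∈ Wf, (d * ((∏ x ∈ Bf z, ss x) * ss z)) :=
          Finset.prod_le_prod (fun z _ => mul_nonneg (hppP (Bf z)) (hV0 z)) hBrot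
        have hb3 : ∏ z ∈ Wf, (d * ((∏ x ∈ Bf z, ss x) * ss z)) =
            d ^ Wf.card * ((∏ x ∈ Ef, ss x) * ∏ z ∈ Wf, ss z) := by
          rw [Finset.prod_mul_distrib, Finset.prod_const, Finset.prod_mul_distrib, hfib]
        have hQsplit : ∏ a ∈ Tf, Qτ a =
            (∏ a ∈ Uf, Qτ a) * ((∏ x ∈ Ef, Qτ x) * ∏ z ∈ Wf, Qτ z) * ∏ a ∈ Rf \ Wf, Qτ a := by
          rw [hsplitSR Qτ, hsplitUE Qτ, hsplitRW Qτ]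
          ring
        calc (∏ a ∈ Uf, pp a) * (∏ z ∈ Wf, ((∏ x ∈ Bf z, pp x) * Vv z)) * ∏ a ∈ Rf \ Wf, Vv a
            ≤ (∏ a ∈ Uf, ss a) * (∏ z ∈ Wf, (d * ((∏ x ∈ Bf z, ss x) * ss z))) *
              ∏ a ∈ Rf \ Wf, Vv a := by
              apply mul_le_mul_of_nonneg_right ?_ (hVvP _)
              exact mul_le_mul hUrot hb2
                (Finset.prod_nonneg fun z _ => mul_nonneg (hppP (Bf z)) (hV0 z)) (hssP Uf)
          _ = d ^ Wf.card * ((∏ a ∈ Uf, ss a) * ((∏ x ∈ Ef, ss x) * ∏ z ∈ Wf, ss z) *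
              ∏ a ∈ Rf \ Wf, Vv a) := by
              rw [hb3]; ring
          _ ≤ d ^ Wf.card * ∏ a ∈ Tf, Qτ a := by
              apply mul_le_mul_of_nonneg_left ?_ (by positivity)
              rw [hQsplit]
              apply mul_le_mul
              · apply mul_le_mul
                · exact Finset.prod_le_prod (fun a _ => (hs0 a).le) (fun a _ => hQτges a)
                · apply mul_le_mul
                  · exact Finset.prod_le_prod (fun a _ => (hs0 a).le) (fun a _ => hQτges a)
                  · exact Finset.prod_le_prod (fun a _ => (hs0 a).le) (fun a _ => hQτges a)
                  · exact hssP Wf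
                  · exact hQτP Ef
                · exact mul_nonneg (hssP Ef) (hssP Wf)
                · exact hQτP Uf
              · exact Finset.prod_le_prod (fun a _ => hV0 a) (fun a _ => hQτgeV a)
              · exact hVvP _
              · exact mul_nonneg (hQτP Uf) (mul_nonneg (hQτP Ef) (hQτP Wf))
      calc ∏ a ∈ Tf, (Vv a + pp a) ≤ 2 ^ Tf.card * ((∏ a ∈ Sf, pp a) * ∏ a ∈ Rf, Vv a) := by
            rw [← s3, ← s2]; exact s1
        _ ≤ 2 ^ Tf.card * (d ^ Wf.card * ∏ a ∈ Tf, Qτ a) :=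
            mul_le_mul_of_nonneg_left s4 (by positivity)
        _ = (2 ^ Tf.card * d ^ Wf.card) * ∏ a ∈ Tf, Qτ a := by ring
        _ ≤ (d + 2) ^ Tf.card * ∏ a ∈ Tf, Qτ a :=
            mul_le_mul_of_nonneg_right hscalar (hQτP Tf)
    -- piece D
    have hC2 : ∏ a ∈ Df, (Vv a + pp a) ≤ (d + 2) ^ Df.card * ∏ a ∈ Df, Vv a := by
      have hb : ∀ a ∈ Df, Vv a + pp a ≤ (d + 2) * Vv a := by
        intro a ha
        have h1 : ¬ T a := (Finset.mem_filter.mp (Finset.mem_filter.mp ha).1).2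
        have h2 : T (σ a) := (Finset.mem_filter.mp ha).2
        have h3 : ¬ Cc a := fun hc => h1 (hTstep a hc h2)
        have h4 : ¬ ((d + 1) * Vv a < pp a) := fun hc => h3 (Or.inr hc)
        push_neg at h4
        linarith [hV0 a]
      calc ∏ a ∈ Df, (Vv a + pp a) ≤ ∏ a ∈ Df, ((d + 2) * Vv a) :=
            Finset.prod_le_prod (fun a _ => add_nonneg (hV0 a) (hp0 a)) hb
        _ = (d + 2) ^ Df.card * ∏ a ∈ Df, Vv a := by
            rw [Finset.prod_mul_distrib, Finset.prod_const]
    -- piece P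
    have hC3 : ∏ a ∈ Pf, (Vv a + pp a) ≤ (d + 2) ^ Pf.card * ∏ a ∈ Pf, Qπ a := by
      have hb : ∀ a ∈ Pf, Vv a + pp a ≤ (d + 2) * Qπ a := by
        intro a _
        have := hQπgeV a
        have := hQπgep a
        have := hQπ0 a
        nlinarith
      calc ∏ a ∈ Pf, (Vv a + pp a) ≤ ∏ a ∈ Pf, ((d + 2) * Qπ a) :=
            Finset.prod_le_prod (fun a _ => add_nonneg (hV0 a) (hp0 a)) hb
        _ = (d + 2) ^ Pf.card * ∏ a ∈ Pf, Qπ a := by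
            rw [Finset.prod_mul_distrib, Finset.prod_const]
    -- values of the chosen allocation on each piece
    have hρT : ∀ a ∈ Tf, multilinear (v a) (y a + indVec (optSet
        (if T a then some (τ a) else if T (σ a) then none else some (π a)))) = Qτ a := by
      intro a ha
      rw [if_pos (Finset.mem_filter.mp ha).2]
      rfl
    have hρD : ∀ a ∈ Df, multilinear (v a) (y a + indVec (optSet
        (if T a then some (τ a) else if T (σ a) then none else some (π a)))) = Vv a := by
      intro a ha
      have h1 : ¬ T a := (Finset.mem_filter.mp (Finset.mem_filter.mp ha).1).2
      have h2 : T (σ a) := (Finset.mem_filter.mp ha).2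
      rw [if_neg h1, if_pos h2]
      show multilinear (v a) (y a + indVec ∅) = Vv a
      rw [add_indVec_empty]
    have hρP : ∀ a ∈ Pf, multilinear (v a) (y a + indVec (optSet
        (if T a then some (τ a) else if T (σ a) then none else some (π a)))) = Qπ a := by
      intro a ha
      have h1 : ¬ T a := (Finset.mem_filter.mp (Finset.mem_filter.mp ha).1).2
      have h2 : ¬ T (σ a) := (Finset.mem_filter.mp ha).2
      rw [if_neg h1, if_neg h2]
      rfl
    have hρ0 : ∀ a : A, 0 ≤ multilinear (v a) (y a + indVec (optSet
        (if T a then some (τ a) else if T (σ a) then none else some (π a)))) := by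
      intro a
      by_cases h1 : T a
      · rw [if_pos h1]
        exact multilinear_nonneg _ (hnn a) _ (add_ind_mem01 (y a) (hy01 a) (τ a) (hyH a a))
      · rw [if_neg h1]
        by_cases h2 : T (σ a)
        · rw [if_pos h2]
          show 0 ≤ multilinear (v a) (y a + indVec ∅)
          rw [add_indVec_empty]
          exact hV0 a
        · rw [if_neg h2]
          exact multilinear_nonneg _ (hnn a) _ (add_ind_mem01 (y a) (hy01 a) (π a) (hyπ a a))
    -- the key product bound
    have hKEY : ∏ a : A, Qπ a ≤ (d + 2) ^ (Fintype.card A) *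
        ∏ a : A, multilinear (v a) (y a + indVec (optSet
          (if T a then some (τ a) else if T (σ a) then none else some (π a)))) := by
      calc ∏ a : A, Qπ a ≤ ∏ a : A, (Vv a + pp a) :=
            Finset.prod_le_prod (fun a _ => hQπ0 a) (fun a _ => hQπle a)
        _ = (∏ a ∈ Tf, (Vv a + pp a)) *
            ((∏ a ∈ Df, (Vv a + pp a)) * ∏ a ∈ Pf, (Vv a + pp a)) :=
            hsplit3 (fun a => Vv a + pp a)
        _ ≤ ((d + 2) ^ Tf.card * ∏ a ∈ Tf, Qτ a) *
            (((d + 2) ^ Df.card * ∏ a ∈ Df, Vv a) *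
              ((d + 2) ^ Pf.card * ∏ a ∈ Pf, Qπ a)) := by
            apply mul_le_mul hC1 (mul_le_mul hC2 hC3
              (Finset.prod_nonneg fun a _ => add_nonneg (hV0 a) (hp0 a))
              (mul_nonneg (by positivity) (hVvP Df)))
              (mul_nonneg (Finset.prod_nonneg fun a _ => add_nonneg (hV0 a) (hp0 a))
                (Finset.prod_nonneg fun a _ => add_nonneg (hV0 a) (hp0 a)))
              (mul_nonneg (by positivity) (hQτP Tf))
        _ = (d + 2) ^ (Fintype.card A) *
            ((∏ a ∈ Tf, Qτ a) * ((∏ a ∈ Df, Vv a) * ∏ a ∈ Pf, Qπ a)) := by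
            rw [← hcard3, pow_add, pow_add]
            ring
        _ = (d + 2) ^ (Fintype.card A) *
            ∏ a : A, multilinear (v a) (y a + indVec (optSet
              (if T a then some (τ a) else if T (σ a) then none else some (π a)))) := by
            congr 1
            rw [hsplit3 (fun a => multilinear (v a) (y a + indVec (optSet
              (if T a then some (τ a) else if T (σ a) then none else some (π a)))))]
            congr 1
            · exact (Finset.prod_congr rfl hρT).symm
            congr 1
            · exact (Finset.prod_congr rfl hρD).symm
            · exact (Finset.prod_congr rfl hρP).symm
    exact rpow_helper d hd (Fintype.card A) _ _
      (Finset.prod_nonneg fun a _ => hρ0 a) (Finset.prod_nonneg fun a _ => hQπ0 a) hKEY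
  · -- the per-agent guarantee
    intro a
    by_cases hA : A' a
    · left
      by_cases h1 : T a
      · rcases hAcase a with h | h
        · exact ⟨τ a, by dsimp only; rw [if_pos h1], h⟩
        · obtain ⟨j, hj1, hj2⟩ := hA
          exact absurd (h j hj1) (not_lt.mpr hj2)
      · have h2 : ¬ T (σ a) := fun h => h1 (hTstep a (Or.inl hA) h)
        refine ⟨π a, by dsimp only; rw [if_neg h1, if_neg h2], ?_⟩
        by_contra hlt
        push_neg at hlt
        exact h1 (hTN a ⟨hA, hlt⟩)
    · right
      intro j hj
      by_contra hge
      push_neg at hge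
      exact hA ⟨j, hj, hge⟩
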